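/- arXiv:1102.2161 — 4 statements merged into one kernel-verified Lean document; each statement's English description precedes it below -/
import Mathlib

section
/- Let n ≥ 1, let k ∈ ℝⁿ with k ≠ 0, let D > 0, and let h : ℝⁿ → [0,∞] be a measurable function. Then ∫_0^∞ ∫_{|ξ| ≤ D} h(ξ + t k) dξ dt ≤ (2D/|k|) ∫_{ℝⁿ} h(ξ) dξ. -/
open MeasureTheory

/-- Small-frequency estimate along transport characteristics:
`∫_0^∞ ∫_{|ξ| ≤ D} h(ξ + t k) dξ dt ≤ (2D/|k|) ∫ h`. -/
theorem transport_tube_estimate (n : ℕ) (hn : 1 ≤ n) (k : EuclideanSpace ℝ (Fin n))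
    (hk : k ≠ 0) (D : ℝ) (hD : 0 < D) (h : EuclideanSpace ℝ (Fin n) → ENNReal)
    (hmeas : Measurable h) :
    ∫⁻ t in Set.Ioi (0 : ℝ), ∫⁻ ξ in {ξ : EuclideanSpace ℝ (Fin n) | ‖ξ‖ ≤ D}, h (ξ + t • k) ≤
      ENNReal.ofReal (2 * D / ‖k‖) * ∫⁻ ξ, h ξ := by
  have hknorm : (0 : ℝ) < ‖k‖ := norm_pos_iff.mpr hk
  have hTset : ∀ ξ : EuclideanSpace ℝ (Fin n),
      MeasurableSet {t : ℝ | ‖ξ - t • k‖ ≤ D} :=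
    fun ξ => (isClosed_le
      ((continuous_const.sub ((continuous_id).smul continuous_const)).norm)
      continuous_const).measurableSet
  -- step 1: translation invariance for each t
  have key : ∀ t : ℝ, ∫⁻ ξ in {ξ : EuclideanSpace ℝ (Fin n) | ‖ξ‖ ≤ D}, h (ξ + t • k)
      = ∫⁻ ξ, ({y : EuclideanSpace ℝ (Fin n) | ‖y - t • k‖ ≤ D}).indicator h ξ := by
    intro t
    have hA : MeasurableSet {ξ : EuclideanSpace ℝ (Fin n) | ‖ξ‖ ≤ D} :=
      (isClosed_le continuous_norm continuous_const).measurableSet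
    rw [← lintegral_indicator hA,
      ← lintegral_add_right_eq_self
        (fun ξ => ({y : EuclideanSpace ℝ (Fin n) | ‖y - t • k‖ ≤ D}).indicator h ξ) (t • k)]
    congr 1
    ext ξ
    by_cases hξ : ‖ξ‖ ≤ D <;>
      simp [Set.indicator_apply, hξ]
  calc ∫⁻ t in Set.Ioi (0 : ℝ), ∫⁻ ξ in {ξ : EuclideanSpace ℝ (Fin n) | ‖ξ‖ ≤ D}, h (ξ + t • k)
      = ∫⁻ t in Set.Ioi (0 : ℝ),
          ∫⁻ ξ, ({y : EuclideanSpace ℝ (Fin n) | ‖y - t • k‖ ≤ D}).indicator h ξ :=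
        lintegral_congr key
    _ = ∫⁻ ξ, ∫⁻ t in Set.Ioi (0 : ℝ),
          ({y : EuclideanSpace ℝ (Fin n) | ‖y - t • k‖ ≤ D}).indicator h ξ := by
        apply lintegral_lintegral_swap
        apply Measurable.aemeasurable
        have hset : MeasurableSet {p : ℝ × EuclideanSpace ℝ (Fin n) | ‖p.2 - p.1 • k‖ ≤ D} := by
          apply (isClosed_le _ continuous_const).measurableSet
          exact (continuous_snd.sub ((continuous_fst).smul continuous_const)).norm
        have heq : (Function.uncurry fun (t : ℝ) (ξ : EuclideanSpace ℝ (Fin n)) =>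
              ({y : EuclideanSpace ℝ (Fin n) | ‖y - t • k‖ ≤ D}).indicator h ξ)
            = fun p : ℝ × EuclideanSpace ℝ (Fin n) =>
              {p : ℝ × EuclideanSpace ℝ (Fin n) | ‖p.2 - p.1 • k‖ ≤ D}.indicator
                (fun q => h q.2) p := by
          ext p
          by_cases hp : ‖p.2 - p.1 • k‖ ≤ D <;>
            simp [Function.uncurry, Set.indicator_apply, hp]
        rw [heq]
        exact (hmeas.comp measurable_snd).indicator hset
    _ ≤ ∫⁻ ξ, ENNReal.ofReal (2 * D / ‖k‖) * h ξ := by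
        apply lintegral_mono
        intro ξ
        have hind : ∀ t : ℝ, ({y : EuclideanSpace ℝ (Fin n) | ‖y - t • k‖ ≤ D}).indicator h ξ
            = ({t : ℝ | ‖ξ - t • k‖ ≤ D}).indicator (fun _ => h ξ) t := by
          intro t
          by_cases ht : ‖ξ - t • k‖ ≤ D <;>
            simp [Set.indicator_apply, ht]
        simp only [hind]
        rw [lintegral_indicator_const (hTset ξ)]
        have hvol : (volume.restrict (Set.Ioi (0:ℝ))) {t : ℝ | ‖ξ - t • k‖ ≤ D}
            ≤ ENNReal.ofReal (2 * D / ‖k‖) := by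
          refine le_trans (Measure.restrict_apply_le _ _) ?_
          refine le_trans (Real.volume_le_diam _) ?_
          apply EMetric.diam_le
          intro s hs u hu
          rw [edist_dist, Real.dist_eq]
          apply ENNReal.ofReal_le_ofReal
          rw [le_div_iff₀ hknorm]
          calc |s - u| * ‖k‖ = ‖(s - u) • k‖ := by
                rw [norm_smul, Real.norm_eq_abs]
            _ = ‖(ξ - u • k) - (ξ - s • k)‖ := by
                congr 1
                rw [sub_smul]
                abel
            _ ≤ ‖ξ - u • k‖ + ‖ξ - s • k‖ := norm_sub_le _ _
            _ ≤ D + D := add_le_add hu hs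
            _ = 2 * D := by ring
        calc h ξ * (volume.restrict (Set.Ioi (0:ℝ))) {t : ℝ | ‖ξ - t • k‖ ≤ D}
            ≤ h ξ * ENNReal.ofReal (2 * D / ‖k‖) := mul_le_mul_right hvol (h ξ)
          _ = ENNReal.ofReal (2 * D / ‖k‖) * h ξ := mul_comm _ _
    _ = ENNReal.ofReal (2 * D / ‖k‖) * ∫⁻ ξ, h ξ := lintegral_const_mul _ hmeas
end

section
/- Let n ≥ 1 and 0 < β ≤ 1. For all ξ, k ∈ ℝⁿ with (ξ, k) ≠ (0,0), one has the pointwise symbol inequality |ξ| · |k| · (|ξ|² + |k|^{2/(1+2β)})^{β−1} ≤ |ξ|^{β} · |k|^{3β/(1+2β)}. -/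
/-- Pointwise symbol inequality controlling the transport commutator term:
`|ξ| |k| (|ξ|² + |k|^{2/(1+2β)})^{β-1} ≤ |ξ|^β |k|^{3β/(1+2β)}`. -/
theorem symbol_inequality (n : ℕ) (hn : 1 ≤ n) (β : ℝ) (hβ0 : 0 < β) (hβ1 : β ≤ 1)
    (ξ k : EuclideanSpace ℝ (Fin n)) (h : (ξ, k) ≠ (0, 0)) :
    ‖ξ‖ * ‖k‖ * (‖ξ‖ ^ (2 : ℝ) + ‖k‖ ^ (2 / (1 + 2 * β))) ^ (β - 1) ≤
      ‖ξ‖ ^ β * ‖k‖ ^ (3 * β / (1 + 2 * β)) := by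
  set a := ‖ξ‖ with ha
  set b := ‖k‖ with hb
  have ha0 : 0 ≤ a := norm_nonneg _
  have hb0 : 0 ≤ b := norm_nonneg _
  have hden : (0:ℝ) < 1 + 2 * β := by linarith
  have hs : (0:ℝ) < 2 / (1 + 2 * β) := by positivity
  rcases eq_or_lt_of_le ha0 with haz | hap
  · rw [← haz]
    rw [Real.zero_rpow (ne_of_gt hβ0)]
    simp
  rcases eq_or_lt_of_le hb0 with hbz | hbp
  · rw [← hbz]
    rw [Real.zero_rpow (ne_of_gt hs), Real.zero_rpow (by positivity : 3 * β / (1 + 2 * β) ≠ 0)]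
    simp
  -- main case: a, b > 0
  set A := a ^ (2:ℝ) with hA
  set B := b ^ (2 / (1 + 2 * β)) with hB
  have hAp : 0 < A := Real.rpow_pos_of_pos hap _
  have hBp : 0 < B := Real.rpow_pos_of_pos hbp _
  have hab : (A * B) ^ ((1:ℝ)/2) ≤ A + B := by
    have h1 : A * B ≤ (A + B) ^ (2:ℕ) := by nlinarith
    calc (A * B) ^ ((1:ℝ)/2) ≤ ((A + B) ^ (2:ℕ)) ^ ((1:ℝ)/2) :=
          Real.rpow_le_rpow (by positivity) h1 (by norm_num)
      _ = A + B := by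
          rw [← Real.rpow_natCast (A + B) 2, ← Real.rpow_mul (by positivity)]
          norm_num
  have key : (A + B) ^ (β - 1) ≤ (A * B) ^ ((β - 1)/2) := by
    calc (A + B) ^ (β - 1) ≤ ((A * B) ^ ((1:ℝ)/2)) ^ (β - 1) :=
          Real.rpow_le_rpow_of_nonpos (by positivity) hab (by linarith)
      _ = (A * B) ^ ((β - 1)/2) := by
          rw [← Real.rpow_mul (by positivity)]; ring_nf
  have step : a * b * (A + B) ^ (β - 1) ≤ a * b * ((A * B) ^ ((β - 1)/2)) :=
    mul_le_mul_of_nonneg_left key (by positivity)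
  refine step.trans_eq ?_
  rw [Real.mul_rpow hAp.le hBp.le, hA, hB, ← Real.rpow_mul ha0, ← Real.rpow_mul hb0]
  have e1 : a * b * (a ^ (2 * ((β - 1)/2)) * b ^ (2 / (1 + 2 * β) * ((β - 1)/2)))
      = (a ^ (1:ℝ) * a ^ (2 * ((β - 1)/2))) * (b ^ (1:ℝ) * b ^ (2 / (1 + 2 * β) * ((β - 1)/2))) := by
    rw [Real.rpow_one, Real.rpow_one]; ring
  rw [e1, ← Real.rpow_add hap, ← Real.rpow_add hbp]
  congr 1
  · congr 1; ring
  · congr 1; field_simp; ring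
end

section
/- Let n ≥ 1 and 0 < β ≤ 1, and define p(k,ξ) = ( (1 + |ξ|²) + (1 + |k|²)^{1/(1+2β)} )^{β} for (k,ξ) ∈ ℝⁿ × ℝⁿ. Then there is a constant C > 0, depending only on n and β, such that |p(k,ξ) − p(k',ξ)| ≤ C |k − k'| for all k, k', ξ ∈ ℝⁿ. -/
noncomputable section

/-- The symbol `p(k,ξ) = ((1+|ξ|²) + (1+|k|²)^{1/(1+2β)})^β` of the multiplier
`P = (⟨D_v⟩² + ⟨D_x⟩^{2/(1+2β)})^β`. -/
def psym (n : ℕ) (β : ℝ) (k ξ : EuclideanSpace ℝ (Fin n)) : ℝ :=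
  ((1 + ‖ξ‖ ^ (2 : ℝ)) + (1 + ‖k‖ ^ (2 : ℝ)) ^ (1 / (1 + 2 * β))) ^ β

private lemma psym_aux_lip (β : ℝ) (hβ0 : 0 < β) (hβ1 : β ≤ 1) (s : ℝ) (hs : 1 ≤ s)
    (r r' : ℝ) :
    |(s + (1 + r ^ 2) ^ (1 / (1 + 2 * β))) ^ β
      - (s + (1 + r' ^ 2) ^ (1 / (1 + 2 * β))) ^ β| ≤ |r - r'| := by
  set γ : ℝ := 1 / (1 + 2 * β) with hγdef
  have h2β : (0:ℝ) < 1 + 2 * β := by linarith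
  have hγ0 : 0 < γ := by positivity
  have hγ1 : γ ≤ 1 := by rw [hγdef, div_le_one h2β]; linarith
  have hγβ : γ * β ≤ 1 / 2 := by
    rw [hγdef, div_mul_eq_mul_div, one_mul, div_le_div_iff₀ h2β (by norm_num)]
    linarith
  set g : ℝ → ℝ := fun r => (s + (1 + r ^ 2) ^ γ) ^ β with hg
  set g' : ℝ → ℝ := fun r =>
    (2 * r) * γ * (1 + r ^ 2) ^ (γ - 1) * β * (s + (1 + r ^ 2) ^ γ) ^ (β - 1) with hg'
  have hbase : ∀ r : ℝ, (1:ℝ) ≤ 1 + r ^ 2 := fun r => by nlinarith [sq_nonneg r]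
  have hbasepos : ∀ r : ℝ, (0:ℝ) < 1 + r ^ 2 := fun r => by nlinarith [sq_nonneg r]
  have hfpos : ∀ r : ℝ, (0:ℝ) < (1 + r ^ 2) ^ γ := fun r =>
    Real.rpow_pos_of_pos (hbasepos r) γ
  have hderiv : ∀ r : ℝ, HasDerivAt g (g' r) r := by
    intro r
    have h1 : HasDerivAt (fun r : ℝ => 1 + r ^ 2) (2 * r) r := by
      simpa using ((hasDerivAt_pow 2 r).const_add 1)
    have h2 : HasDerivAt (fun r : ℝ => (1 + r ^ 2) ^ γ)
        ((2 * r) * γ * (1 + r ^ 2) ^ (γ - 1)) r :=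
      h1.rpow_const (Or.inl (by positivity))
    have h3 : HasDerivAt (fun r : ℝ => s + (1 + r ^ 2) ^ γ)
        ((2 * r) * γ * (1 + r ^ 2) ^ (γ - 1)) r := h2.const_add s
    exact h3.rpow_const (p := β) (Or.inl (by positivity))
  have hbound : ∀ r : ℝ, ‖g' r‖ ≤ 1 := by
    intro r
    set x : ℝ := 1 + r ^ 2 with hx
    have hx1 : (1:ℝ) ≤ x := hbase r
    have hx0 : (0:ℝ) < x := hbasepos r
    have e1 : (s + x ^ γ) ^ (β - 1) ≤ x ^ (γ * (β - 1)) := by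
      rw [Real.rpow_mul hx0.le]
      exact Real.rpow_le_rpow_of_nonpos (hfpos r) (by linarith) (by linarith)
    have e2 : |2 * r| ≤ 2 * x ^ ((1:ℝ)/2) := by
      rw [abs_mul, abs_two]
      have h1 : |r| = (|r| ^ (2:ℝ)) ^ ((1:ℝ)/2) := by
        rw [← Real.rpow_mul (abs_nonneg r)]
        norm_num
      have h2 : (|r| ^ (2:ℝ)) ^ ((1:ℝ)/2) ≤ x ^ ((1:ℝ)/2) := by
        apply Real.rpow_le_rpow (by positivity) _ (by norm_num)
        rw [Real.rpow_two, sq_abs]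
        nlinarith [sq_nonneg r]
      nlinarith [h1 ▸ h2, abs_nonneg r]
    have habs : ‖g' r‖ = |2 * r| * γ * x ^ (γ - 1) * β * (s + x ^ γ) ^ (β - 1) := by
      rw [Real.norm_eq_abs, hg']
      rw [abs_mul, abs_mul, abs_mul, abs_mul]
      rw [abs_of_nonneg hγ0.le, abs_of_nonneg hβ0.le,
        abs_of_nonneg (Real.rpow_nonneg hx0.le _),
        abs_of_nonneg (Real.rpow_nonneg (by positivity) _)]
    rw [habs]
    calc |2 * r| * γ * x ^ (γ - 1) * β * (s + x ^ γ) ^ (β - 1)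
        ≤ (2 * x ^ ((1:ℝ)/2)) * γ * x ^ (γ - 1) * β * (x ^ (γ * (β - 1))) := by
          gcongr
      _ = 2 * γ * β * (x ^ ((1:ℝ)/2) * x ^ (γ - 1) * x ^ (γ * (β - 1))) := by ring
      _ = 2 * γ * β * x ^ ((1:ℝ)/2 + (γ - 1) + γ * (β - 1)) := by
          rw [← Real.rpow_add hx0, ← Real.rpow_add hx0]
      _ ≤ 2 * γ * β * 1 := by
          gcongr
          exact Real.rpow_le_one_of_one_le_of_nonpos hx1 (by nlinarith)
      _ ≤ 1 := by nlinarith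
  have := Convex.norm_image_sub_le_of_norm_hasDerivWithin_le (f := g) (f' := g')
    (s := Set.univ) (C := 1) (fun x _ => (hderiv x).hasDerivWithinAt)
    (fun x _ => hbound x) convex_univ (Set.mem_univ r') (Set.mem_univ r)
  simpa [Real.norm_eq_abs] using this

/-- Lipschitz estimate for the symbol p in the space-frequency variable k. -/
theorem psym_lipschitz_k (n : ℕ) (hn : 1 ≤ n) (β : ℝ) (hβ0 : 0 < β) (hβ1 : β ≤ 1) :
    ∃ C > 0, ∀ k k' ξ : EuclideanSpace ℝ (Fin n),
      |psym n β k ξ - psym n β k' ξ| ≤ C * ‖k - k'‖ := by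
  refine ⟨1, one_pos, fun k k' ξ => ?_⟩
  have hs : (1:ℝ) ≤ 1 + ‖ξ‖ ^ (2:ℝ) := by
    have := Real.rpow_nonneg (norm_nonneg ξ) 2; linarith
  have h := psym_aux_lip β hβ0 hβ1 (1 + ‖ξ‖ ^ (2:ℝ)) hs ‖k‖ ‖k'‖
  rw [one_mul]
  unfold psym
  rw [show ‖k‖ ^ (2:ℝ) = ‖k‖ ^ 2 from Real.rpow_two _,
    show ‖k'‖ ^ (2:ℝ) = ‖k'‖ ^ 2 from Real.rpow_two _]
  exact h.trans (abs_norm_sub_norm_le k k')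
end
end

section
/- Let n ≥ 1 and 0 < β ≤ 1, and define p(k,ξ) = ( (1 + |ξ|²) + (1 + |k|²)^{1/(1+2β)} )^{β} for (k,ξ) ∈ ℝⁿ × ℝⁿ. Then there is a constant C > 0, depending only on n and β, such that for all k, ξ, ξ' ∈ ℝⁿ: if β ≤ 1/2 then |p(k,ξ) − p(k,ξ')| ≤ C |ξ − ξ'|, and if β ≥ 1/2 then |p(k,ξ) − p(k,ξ')| ≤ C |ξ − ξ'| ( (1+|ξ|²)^{(2β−1)/2} + (1+|ξ'|²)^{(2β−1)/2} ). -/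
/-!
With `c = 1 + ⟨k⟩^{2/(1+2β)} ≥ 1` we have `p(k, ξ) = (c + |ξ|²)^β`, whose gradient
`2βξ (c + |ξ|²)^{β-1}` has norm at most `2β ⟨ξ⟩^{2β-1}`, since `c ≥ 1` and `β ≤ 1`.
The mean value inequality on the ball of radius `max (|ξ|, |ξ'|)` gives both estimates:
the weight `⟨η⟩^{2β-1}` is at most `1` when `β ≤ 1/2`, and when `β ≥ 1/2` it is largest
on that ball at `ξ` or `ξ'`.
-/

noncomputable section

open Real Metric

theorem rpow_one_add_sq_le_max (γ : ℝ) {s t u : ℝ} (hs : 0 ≤ s) (hst : s ≤ max t u) :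
    (1 + s ^ 2) ^ γ ≤ max 1 (max ((1 + t ^ 2) ^ γ) ((1 + u ^ 2) ^ γ)) := by
  rcases le_total γ 0 with hγ | hγ
  · exact (rpow_le_one_of_one_le_of_nonpos (by nlinarith) hγ).trans (le_max_left _ _)
  refine le_max_of_le_right ?_
  rcases le_max_iff.mp hst with hst | hsu
  · exact le_max_of_le_left (by gcongr)
  · exact le_max_of_le_right (by gcongr)

section

variable {E : Type*} [NormedAddCommGroup E] [InnerProductSpace ℝ E] {β c : ℝ}

theorem hasFDerivAt_rpow_const_add_norm_sq (hc : 0 < c) (x : E) :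
    HasFDerivAt (fun x : E => (c + ‖x‖ ^ 2) ^ β)
      ((2 * β * (c + ‖x‖ ^ 2) ^ (β - 1)) • innerSL ℝ x) x := by
  have hsq : HasFDerivAt (fun x : E => c + ‖x‖ ^ 2) (2 • innerSL ℝ x) x :=
    (hasStrictFDerivAt_norm_sq x).hasFDerivAt.const_add c
  convert hsq.rpow_const (p := β) (Or.inl (by positivity)) using 1
  module

theorem norm_fderiv_rpow_const_add_norm_sq_le (hc : 1 ≤ c) (hβ : β ≤ 1) (x : E) :
    ‖(2 * β * (c + ‖x‖ ^ 2) ^ (β - 1)) • innerSL ℝ x‖ ≤ 2 * |β| * (1 + ‖x‖ ^ 2) ^ (β - 1 / 2) := by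
  have hc' : (c + ‖x‖ ^ 2) ^ (β - 1) ≤ (1 + ‖x‖ ^ 2) ^ (β - 1) :=
    rpow_le_rpow_of_nonpos (by positivity) (by linarith) (by linarith)
  have hx : ‖x‖ ≤ (1 + ‖x‖ ^ 2) ^ (1 / 2 : ℝ) := by
    rw [← sqrt_eq_rpow]
    exact le_sqrt_of_sq_le (by linarith)
  calc ‖(2 * β * (c + ‖x‖ ^ 2) ^ (β - 1)) • innerSL ℝ x‖
      = 2 * |β| * (c + ‖x‖ ^ 2) ^ (β - 1) * ‖x‖ := by
        rw [norm_smul, innerSL_apply_norm, norm_mul, norm_mul, norm_two, norm_eq_abs,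
          Real.norm_of_nonneg (by positivity)]
    _ ≤ 2 * |β| * (1 + ‖x‖ ^ 2) ^ (β - 1) * (1 + ‖x‖ ^ 2) ^ (1 / 2 : ℝ) := by gcongr
    _ = 2 * |β| * (1 + ‖x‖ ^ 2) ^ (β - 1 / 2) := by
        rw [mul_assoc, ← rpow_add (by positivity)]
        ring_nf

theorem abs_rpow_const_add_norm_sq_sub_le (hc : 1 ≤ c) (hβ : β ≤ 1) (x y : E) :
    |(c + ‖x‖ ^ 2) ^ β - (c + ‖y‖ ^ 2) ^ β| ≤
      2 * |β| * max 1 (max ((1 + ‖x‖ ^ 2) ^ (β - 1 / 2)) ((1 + ‖y‖ ^ 2) ^ (β - 1 / 2))) *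
        ‖x - y‖ := by
  have hderiv : ∀ z ∈ closedBall (0 : E) (max ‖x‖ ‖y‖),
      HasFDerivWithinAt (fun x : E => (c + ‖x‖ ^ 2) ^ β)
        ((2 * β * (c + ‖z‖ ^ 2) ^ (β - 1)) • innerSL ℝ z) (closedBall 0 (max ‖x‖ ‖y‖)) z :=
    fun z _ => (hasFDerivAt_rpow_const_add_norm_sq (by linarith) z).hasFDerivWithinAt
  have hbound : ∀ z ∈ closedBall (0 : E) (max ‖x‖ ‖y‖),
      ‖(2 * β * (c + ‖z‖ ^ 2) ^ (β - 1)) • innerSL ℝ z‖ ≤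
        2 * |β| * max 1 (max ((1 + ‖x‖ ^ 2) ^ (β - 1 / 2)) ((1 + ‖y‖ ^ 2) ^ (β - 1 / 2))) := by
    intro z hz
    rw [mem_closedBall_zero_iff] at hz
    exact (norm_fderiv_rpow_const_add_norm_sq_le hc hβ z).trans
      (by gcongr; exact rpow_one_add_sq_le_max _ (norm_nonneg z) hz)
  simpa [← norm_eq_abs] using (convex_closedBall _ _).norm_image_sub_le_of_norm_hasFDerivWithin_le
    hderiv hbound (by simp) (by simp)

end

theorem psym_eq (n : ℕ) (β : ℝ) (k ξ : EuclideanSpace ℝ (Fin n)) :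
    psym n β k ξ = (1 + (1 + ‖k‖ ^ (2 : ℝ)) ^ (1 / (1 + 2 * β)) + ‖ξ‖ ^ 2) ^ β := by
  rw [psym, add_right_comm, rpow_two ‖ξ‖]

theorem psym_lipschitz_xi_general (n : ℕ) (β : ℝ) (hβ0 : 0 < β) (hβ1 : β ≤ 1) :
    ∃ C > 0, ∀ k ξ ξ' : EuclideanSpace ℝ (Fin n),
      (β ≤ 1 / 2 → |psym n β k ξ - psym n β k ξ'| ≤ C * ‖ξ - ξ'‖) ∧
      (1 / 2 ≤ β → |psym n β k ξ - psym n β k ξ'| ≤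
        C * ‖ξ - ξ'‖ * ((1 + ‖ξ‖ ^ (2 : ℝ)) ^ ((2 * β - 1) / 2) +
          (1 + ‖ξ'‖ ^ (2 : ℝ)) ^ ((2 * β - 1) / 2))) := by
  refine ⟨2, two_pos, fun k ξ ξ' => ?_⟩
  have hγ : (2 * β - 1) / 2 = β - 1 / 2 := by ring
  simp only [psym_eq, rpow_two, hγ]
  have hc : 1 ≤ 1 + (1 + ‖k‖ ^ 2) ^ (1 / (1 + 2 * β)) := le_add_of_nonneg_right (by positivity)
  have hmvt := abs_rpow_const_add_norm_sq_sub_le hc hβ1 ξ ξ'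
  have hβabs : 2 * |β| ≤ 2 := by rw [abs_of_pos hβ0]; linarith
  set a := (1 + ‖ξ‖ ^ 2) ^ (β - 1 / 2)
  set b := (1 + ‖ξ'‖ ^ 2) ^ (β - 1 / 2)
  refine ⟨fun hβ => ?_, fun hβ => ?_⟩
  · have hweight : max 1 (max a b) = 1 :=
      max_eq_left (max_le (rpow_le_one_of_one_le_of_nonpos (by nlinarith) (by linarith))
        (rpow_le_one_of_one_le_of_nonpos (by nlinarith) (by linarith)))
    rw [hweight, mul_one] at hmvt
    exact hmvt.trans (by gcongr)
  · have ha : 1 ≤ a := one_le_rpow (by nlinarith) (by linarith)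
    have hb : 0 ≤ b := by positivity
    have hweight : max 1 (max a b) ≤ a + b :=
      max_le (by linarith) (max_le (by linarith) (by linarith))
    calc _ ≤ _ := hmvt
      _ ≤ 2 * (a + b) * ‖ξ - ξ'‖ := by gcongr
      _ = _ := by ring

/-- Lipschitz-type estimates for the symbol p in the velocity-frequency variable ξ:
unweighted for β ≤ 1/2, weighted by ⟨ξ⟩^{2β-1} + ⟨ξ'⟩^{2β-1} for β ≥ 1/2. -/
theorem psym_lipschitz_xi (n : ℕ) (hn : 1 ≤ n) (β : ℝ) (hβ0 : 0 < β) (hβ1 : β ≤ 1) :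
    ∃ C > 0, ∀ k ξ ξ' : EuclideanSpace ℝ (Fin n),
      (β ≤ 1 / 2 → |psym n β k ξ - psym n β k ξ'| ≤ C * ‖ξ - ξ'‖) ∧
      (1 / 2 ≤ β → |psym n β k ξ - psym n β k ξ'| ≤
        C * ‖ξ - ξ'‖ * ((1 + ‖ξ‖ ^ (2 : ℝ)) ^ ((2 * β - 1) / 2) +
          (1 + ‖ξ'‖ ^ (2 : ℝ)) ^ ((2 * β - 1) / 2))) :=
  psym_lipschitz_xi_general n β hβ0 hβ1
end
end
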